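/- arXiv:1007.1207 — 2 statements merged into one kernel-verified Lean document; each statement's English description precedes it below -/
import Mathlib

section
/- In the group algebra ℤ[S_n] (n ≥ 2), the product Φ_1 Φ_2 ⋯ Φ_{n-1} equals the sum of all elements of S_n, where Φ_j = 1 + ∑_{i=1}^{j} t_{i,j+1}. -/
/-- The symmetric group `S_n`, realized as the permutations of `ℕ` fixing every
point outside the letters `{1, …, n}`. -/
def SsetN (n : ℕ) : Set (Equiv.Perm ℕ) := {w | ∀ x : ℕ, ¬(1 ≤ x ∧ x ≤ n) → w x = x}

/-- `Φ_j = 1 + ∑_{i=1}^{j} t_{i, j+1} ∈ ℤ[S_n]`, where `t_{ij} = (i j)`. -/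
noncomputable def phiA (j : ℕ) : MonoidAlgebra ℤ (Equiv.Perm ℕ) :=
  1 + ∑ i ∈ Finset.Icc 1 j, MonoidAlgebra.of ℤ (Equiv.Perm ℕ) (Equiv.swap i (j + 1))

/-!
Every `w ∈ S_{k+1}` factors uniquely as `u * (i k+1)` with `u ∈ S_k` and
`i = w⁻¹ (k+1) ∈ [1, k+1]`. Since `Φ_k = ∑_{i=1}^{k+1} (i k+1)` (the term `i = k+1` being the
identity), this coset decomposition reads `∑ S_{k+1} = (∑ S_k) * Φ_k`, and induction from
`S_0 = {1}` gives the product formula; `Φ_0 = 1` absorbs the shift of index.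
-/

open Equiv Finset

local notation "of" => MonoidAlgebra.of ℤ (Perm ℕ)

theorem SsetN_eq_fixingSubgroup (n : ℕ) :
    SsetN n = fixingSubgroup (Perm ℕ) (Set.Icc 1 n)ᶜ := by
  ext w
  simp [SsetN, mem_fixingSubgroup_iff, Perm.smul_def]

theorem SsetN_finite (n : ℕ) : (SsetN n).Finite := by
  have : Finite (Set.Icc 1 n) := (Set.finite_Icc 1 n).to_subtype
  exact Set.finite_coe_iff.mp
    (Finite.of_equiv _ (Perm.subtypeEquivSubtypePerm (· ∈ Set.Icc 1 n)))

theorem SsetN_zero : SsetN 0 = {1} := by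
  ext w
  simp [SsetN, Perm.ext_iff, Nat.one_le_iff_ne_zero]

theorem mul_mem_SsetN {n : ℕ} {u v : Perm ℕ} (hu : u ∈ SsetN n) (hv : v ∈ SsetN n) :
    u * v ∈ SsetN n := by
  rw [SsetN_eq_fixingSubgroup] at *
  exact mul_mem hu hv

theorem inv_mem_SsetN {n : ℕ} {w : Perm ℕ} (hw : w ∈ SsetN n) : w⁻¹ ∈ SsetN n := by
  rw [SsetN_eq_fixingSubgroup] at *
  exact inv_mem hw

theorem SsetN_mono {m n : ℕ} (h : m ≤ n) : SsetN m ⊆ SsetN n :=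
  fun _ hw x hx => hw x fun hx' => hx ⟨hx'.1, hx'.2.trans h⟩

theorem apply_mem_Icc_of_mem_SsetN {n x : ℕ} {w : Perm ℕ} (hw : w ∈ SsetN n)
    (hx : x ∈ Icc 1 n) : w x ∈ Icc 1 n := by
  by_contra hwx
  rw [mem_Icc] at hx hwx
  rw [w.injective (hw (w x) hwx)] at hwx
  exact hwx hx

theorem swap_mem_SsetN {n i j : ℕ} (hi : i ∈ Icc 1 n) (hj : j ∈ Icc 1 n) :
    swap i j ∈ SsetN n := by
  intro x hx
  rw [mem_Icc] at hi hj
  exact swap_apply_of_ne_of_ne (by omega) (by omega)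

theorem mem_SsetN_of_mem_succ {k : ℕ} {w : Perm ℕ} (hw : w ∈ SsetN (k + 1))
    (hk : w (k + 1) = k + 1) : w ∈ SsetN k := by
  intro x hx
  by_cases hxk : x = k + 1
  · rw [hxk, hk]
  · exact hw x (by omega)

theorem apply_succ_of_mem_SsetN {k : ℕ} {u : Perm ℕ} (hu : u ∈ SsetN k) : u (k + 1) = k + 1 :=
  hu (k + 1) (by omega)

theorem phiA_zero : phiA 0 = 1 := by
  simp [phiA]

theorem phiA_eq_sum (k : ℕ) : phiA k = ∑ i ∈ Icc 1 (k + 1), of (swap i (k + 1)) := by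
  rw [sum_Icc_succ_top (by omega), swap_self, ← Perm.one_def, map_one, phiA, add_comm]

theorem sum_SsetN_succ (k : ℕ) :
    ∑ w ∈ (SsetN_finite (k + 1)).toFinset, of w =
      (∑ u ∈ (SsetN_finite k).toFinset, of u) * phiA k := by
  rw [phiA_eq_sum, sum_mul_sum, ← sum_product']
  simp only [← map_mul]
  symm
  refine sum_nbij' (fun p => p.1 * swap p.2 (k + 1))
    (fun w => (w * swap (w⁻¹ (k + 1)) (k + 1), w⁻¹ (k + 1))) ?_ ?_ ?_ ?_ fun _ _ => rfl
  · rintro ⟨u, i⟩ hui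
    rw [mem_product, Set.Finite.mem_toFinset] at hui
    rw [Set.Finite.mem_toFinset]
    exact mul_mem_SsetN (SsetN_mono k.le_succ hui.1) (swap_mem_SsetN hui.2 (by simp))
  · intro w hw
    rw [Set.Finite.mem_toFinset] at hw
    have hw' : w⁻¹ (k + 1) ∈ Icc 1 (k + 1) :=
      apply_mem_Icc_of_mem_SsetN (inv_mem_SsetN hw) (by simp)
    refine mem_product.mpr ⟨(Set.Finite.mem_toFinset _).mpr ?_, hw'⟩
    refine mem_SsetN_of_mem_succ (mul_mem_SsetN hw (swap_mem_SsetN hw' (by simp))) ?_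
    simp [Perm.mul_apply]
  · rintro ⟨u, i⟩ hui
    rw [mem_product, Set.Finite.mem_toFinset] at hui
    have hi : (u * swap i (k + 1))⁻¹ (k + 1) = i := by
      rw [mul_inv_rev, swap_inv, Perm.mul_apply, apply_succ_of_mem_SsetN (inv_mem_SsetN hui.1),
        swap_apply_right]
    dsimp only
    rw [hi, mul_assoc, swap_mul_self, mul_one]
  · intro w _
    simp [mul_assoc]

theorem prod_phiA_range (n : ℕ) :
    ((List.range n).map phiA).prod = ∑ᶠ w ∈ SsetN n, of w := by
  rw [finsum_mem_eq_finite_toFinset_sum _ (SsetN_finite n)]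
  induction n with
  | zero =>
    rw [show (SsetN_finite 0).toFinset = {1} by ext; simp [SsetN_zero], sum_singleton, map_one,
      List.range_zero, List.map_nil, List.prod_nil]
  | succ k ih => rw [List.prod_range_succ, ih, sum_SsetN_succ]

theorem phi_factorization_A_general (n : ℕ) :
    ((List.range (n - 1)).map fun j => phiA (j + 1)).prod =
      ∑ᶠ w ∈ SsetN n, MonoidAlgebra.of ℤ (Equiv.Perm ℕ) w := by
  rw [← prod_phiA_range]
  cases n with
  | zero => rfl
  | succ m => simp [List.range_succ_eq_map, phiA_zero, Function.comp_def]

/-- In `ℤ[S_n]` (`n ≥ 2`), `Φ_1 Φ_2 ⋯ Φ_{n-1}` equals the sum of all elements of `S_n`. -/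
theorem phi_factorization_A (n : ℕ) (hn : 2 ≤ n) :
    ((List.range (n - 1)).map fun j => phiA (j + 1)).prod =
      ∑ᶠ w ∈ SsetN n, MonoidAlgebra.of ℤ (Equiv.Perm ℕ) w :=
  phi_factorization_A_general n
end

section
/- The joint generating function of type B inversion number and the statistic m_B over B_n is ∑_{w ∈ B_n} q^{inv_B(w)} t^{m_B(w)} = ∏_{i=1}^{n} (1 + t·[2i]_q − t), where [k]_q = 1 + q + ⋯ + q^{k-1}. -/
/-- `w` is a signed permutation in the hyperoctahedral group `B_n`. -/
def IsSignedPerm (n : ℕ) (w : Equiv.Perm ℤ) : Prop :=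
  (∀ x : ℤ, w (-x) = -w x) ∧ ∀ x : ℤ, (n : ℤ) < |x| → w x = x

/-- `N(w)`: the number of negative entries among `w(1), …, w(n)`. -/
noncomputable def NB (n : ℕ) (w : Equiv.Perm ℤ) : ℕ :=
  ((Finset.Icc (1 : ℤ) (n : ℤ)).filter fun i => w i < 0).card

/-- The type B inversion number:
`inv_B(w) = #{i<j : w(i)>w(j)} + #{i<j : -w(i)>w(j)} + N(w)` with `1 ≤ i < j ≤ n`. -/
noncomputable def invB (n : ℕ) (w : Equiv.Perm ℤ) : ℕ :=
  ((Finset.Icc (1 : ℤ) (n : ℤ) ×ˢ Finset.Icc (1 : ℤ) (n : ℤ)).filter fun p =>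
      p.1 < p.2 ∧ w p.2 < w p.1).card +
    ((Finset.Icc (1 : ℤ) (n : ℤ) ×ˢ Finset.Icc (1 : ℤ) (n : ℤ)).filter fun p =>
      p.1 < p.2 ∧ w p.2 < -w p.1).card + NB n w

/-- `m_B(w) = #{i : w(i) > |w(j)| for some j > i} + N(w)`, with `1 ≤ i, j ≤ n`. -/
noncomputable def mB (n : ℕ) (w : Equiv.Perm ℤ) : ℕ :=
  ((Finset.Icc (1 : ℤ) (n : ℤ)).filter fun i =>
      ∃ j ∈ Finset.Icc (1 : ℤ) (n : ℤ), i < j ∧ |w j| < w i).card + NB n w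


/-!
Every `w ∈ B_(n+1)` arises from a unique `u ∈ B_n` by inserting the letter `n + 1` or `-(n + 1)`
at one of the positions `1, …, n + 1`. As the new letter exceeds all others in absolute value,
inserting `n + 1` at position `p` raises `inv_B` by `n + 1 - p` and inserting `-(n + 1)` raises it
by `n + p`, while `m_B` grows by one except when `n + 1` is appended at the end. The `2(n + 1)`
insertions thus carry the weights `q^j t^[j ≠ 0]` for `0 ≤ j < 2(n + 1)`, which sum to the factor
`1 + t [2(n + 1)]_q - t`.
-/

open Finset

def succAbove (p x : ℤ) : ℤ := if x < p then x else x + 1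

section succAbove

variable {n p : ℤ}

theorem succAbove_lt_succAbove_iff {x y : ℤ} : succAbove p x < succAbove p y ↔ x < y := by
  unfold succAbove; split_ifs <;> omega

theorem succAbove_lt_iff {x : ℤ} : succAbove p x < p ↔ x < p := by
  unfold succAbove; split_ifs <;> omega

theorem lt_succAbove_iff {x : ℤ} : p < succAbove p x ↔ p ≤ x := by
  unfold succAbove; split_ifs <;> omega

theorem Icc_add_one_eq_insert_image_succAbove (hp₁ : 1 ≤ p) (hp₂ : p ≤ n + 1) :
    Icc 1 (n + 1) = insert p ((Icc 1 n).image (succAbove p)) := by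
  ext i
  simp only [mem_insert, mem_image, mem_Icc, succAbove]
  constructor
  · intro hi
    by_cases hip : i = p
    · exact .inl hip
    · exact .inr ⟨if i < p then i else i - 1, by split_ifs <;> omega, by split_ifs <;> omega⟩
  · rintro (rfl | ⟨x, hx, rfl⟩)
    · omega
    · split_ifs <;> omega

theorem sum_Icc_add_one_eq {M : Type*} [AddCommMonoid M] (hp₁ : 1 ≤ p) (hp₂ : p ≤ n + 1)
    (g : ℤ → M) : ∑ i ∈ Icc 1 (n + 1), g i = g p + ∑ x ∈ Icc 1 n, g (succAbove p x) := by
  have hinj : Set.InjOn (succAbove p) (Icc 1 n) := fun x _ y _ hxy => by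
    unfold succAbove at hxy; split_ifs at hxy <;> omega
  have hp : p ∉ (Icc 1 n).image (succAbove p) := by
    simp only [mem_image, not_exists, not_and]
    intro x _ hx
    unfold succAbove at hx; split_ifs at hx <;> omega
  rw [Icc_add_one_eq_insert_image_succAbove hp₁ hp₂, sum_insert hp, sum_image hinj]

theorem exists_mem_Icc_add_one_iff (hp₁ : 1 ≤ p) (hp₂ : p ≤ n + 1) (Q : ℤ → Prop) :
    (∃ i ∈ Icc 1 (n + 1), Q i) ↔ Q p ∨ ∃ x ∈ Icc 1 n, Q (succAbove p x) := by
  rw [Icc_add_one_eq_insert_image_succAbove hp₁ hp₂, exists_mem_insert, exists_mem_image]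

theorem card_filter_Icc_add_one (hp₁ : 1 ≤ p) (hp₂ : p ≤ n + 1) (P : ℤ → Prop)
    [DecidablePred P] :
    #{i ∈ Icc 1 (n + 1) | P i} = (if P p then 1 else 0) + #{x ∈ Icc 1 n | P (succAbove p x)} := by
  rw [card_filter, card_filter, sum_Icc_add_one_eq hp₁ hp₂]

theorem card_filter_pairs_Icc_add_one (hp₁ : 1 ≤ p) (hp₂ : p ≤ n + 1) (R : ℤ → ℤ → Prop)
    [DecidableRel R] :
    #{ij ∈ Icc 1 (n + 1) ×ˢ Icc 1 (n + 1) | ij.1 < ij.2 ∧ R ij.1 ij.2} =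
      #{ij ∈ Icc 1 n ×ˢ Icc 1 n | ij.1 < ij.2 ∧ R (succAbove p ij.1) (succAbove p ij.2)} +
        #{x ∈ Icc 1 n | x < p ∧ R (succAbove p x) p} +
        #{y ∈ Icc 1 n | p ≤ y ∧ R p (succAbove p y)} := by
  simp only [card_filter, sum_product, sum_Icc_add_one_eq hp₁ hp₂, lt_irrefl, false_and,
    if_false, zero_add, succAbove_lt_succAbove_iff, succAbove_lt_iff, lt_succAbove_iff,
    sum_add_distrib]
  abel

theorem card_filter_Icc_lt_and {Q : ℤ → Prop} [DecidablePred Q] {c : Prop} [Decidable c]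
    (hp : p ≤ n + 1) (hQ : ∀ x ∈ Icc 1 n, Q x ↔ c) :
    #{x ∈ Icc 1 n | x < p ∧ Q x} = if c then (p - 1).toNat else 0 := by
  split_ifs with hc
  · have : {x ∈ Icc 1 n | x < p ∧ Q x} = Icc 1 (p - 1) := by
      ext x
      simp only [mem_filter, mem_Icc]
      exact ⟨fun ⟨hx, hxp, _⟩ => by omega, fun hx =>
        ⟨by omega, by omega, (hQ x (mem_Icc.2 (by omega))).2 hc⟩⟩
    rw [this, Int.card_Icc, sub_add_cancel]
  · rw [filter_false_of_mem fun x hx h => hc ((hQ x hx).1 h.2), card_empty]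

theorem card_filter_Icc_le_and {Q : ℤ → Prop} [DecidablePred Q] {c : Prop} [Decidable c]
    (hp : 1 ≤ p) (hQ : ∀ x ∈ Icc 1 n, Q x ↔ c) :
    #{x ∈ Icc 1 n | p ≤ x ∧ Q x} = if c then (n + 1 - p).toNat else 0 := by
  split_ifs with hc
  · have : {x ∈ Icc 1 n | p ≤ x ∧ Q x} = Icc p n := by
      ext x
      simp only [mem_filter, mem_Icc]
      exact ⟨fun ⟨hx, hxp, _⟩ => by omega, fun hx =>
        ⟨by omega, by omega, (hQ x (mem_Icc.2 (by omega))).2 hc⟩⟩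
    rw [this, Int.card_Icc]
  · rw [filter_false_of_mem fun x hx h => hc ((hQ x hx).1 h.2), card_empty]

end succAbove

/-- The word `w 1, …, w (n + 1)` is `u 1, …, u n` with the letter `v` inserted at position `p`. -/
structure IsInsertion (n : ℤ) (u w : ℤ → ℤ) (p v : ℤ) : Prop where
  one_le : 1 ≤ p
  le_add_one : p ≤ n + 1
  apply_pos : w p = v
  apply_succAbove : ∀ x ∈ Icc 1 n, w (succAbove p x) = u x

namespace IsInsertion

section Words

variable {n p v : ℤ} {u w : ℤ → ℤ}

theorem card_filter_pairs (h : IsInsertion n u w p v) (R : ℤ → ℤ → Prop) [DecidableRel R] :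
    #{ij ∈ Icc 1 (n + 1) ×ˢ Icc 1 (n + 1) | ij.1 < ij.2 ∧ R (w ij.1) (w ij.2)} =
      #{ij ∈ Icc 1 n ×ˢ Icc 1 n | ij.1 < ij.2 ∧ R (u ij.1) (u ij.2)} +
        #{x ∈ Icc 1 n | x < p ∧ R (u x) v} + #{y ∈ Icc 1 n | p ≤ y ∧ R v (u y)} := by
  rw [card_filter_pairs_Icc_add_one h.one_le h.le_add_one (fun i j => R (w i) (w j))]
  simp only [h.apply_pos]
  refine congrArg₂ (· + ·) (congrArg₂ (· + ·) ?_ ?_) ?_ <;>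
    refine congrArg card (filter_congr ?_)
  · rintro ij hij
    rw [mem_product] at hij
    rw [h.apply_succAbove _ hij.1, h.apply_succAbove _ hij.2]
  all_goals exact fun x hx => by rw [h.apply_succAbove x hx]

theorem exists_mem_Icc_add_one_apply_iff (h : IsInsertion n u w p v) (Q : ℤ → ℤ → Prop) :
    (∃ j ∈ Icc 1 (n + 1), Q j (w j)) ↔ Q p v ∨ ∃ y ∈ Icc 1 n, Q (succAbove p y) (u y) := by
  rw [exists_mem_Icc_add_one_iff h.one_le h.le_add_one, h.apply_pos]
  refine or_congr_right ⟨fun ⟨y, hy, hQ⟩ => ⟨y, hy, ?_⟩, fun ⟨y, hy, hQ⟩ => ⟨y, hy, ?_⟩⟩ <;>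
    rwa [h.apply_succAbove y hy] at *

theorem card_filter_exists_lt_abs_lt (h : IsInsertion n u w p v)
    (hu : ∀ x ∈ Icc 1 n, |u x| ≤ n) (hv : |v| = n + 1) :
    #{i ∈ Icc 1 (n + 1) | ∃ j ∈ Icc 1 (n + 1), i < j ∧ |w j| < w i} =
      (if 0 < v ∧ p ≤ n then 1 else 0) +
        #{i ∈ Icc (1 : ℤ) n | ∃ j ∈ Icc (1 : ℤ) n, i < j ∧ |u j| < u i} := by
  have hbound := fun x hx => abs_le.1 (hu x hx)
  have hp₁ := h.one_le
  have hnew : (∃ j ∈ Icc 1 (n + 1), p < j ∧ |w j| < w p) ↔ 0 < v ∧ p ≤ n := by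
    rw [h.apply_pos, h.exists_mem_Icc_add_one_apply_iff fun j wj => p < j ∧ |wj| < v]
    simp only [lt_irrefl, false_and, false_or, lt_succAbove_iff]
    constructor
    · rintro ⟨y, hy, hpy, hyv⟩
      have := abs_nonneg (u y)
      rw [mem_Icc] at hy
      omega
    · rintro ⟨hv₀, hpn⟩
      have := hbound p (mem_Icc.2 ⟨hp₁, hpn⟩)
      have : v = n + 1 := (abs_of_pos hv₀).symm.trans hv
      exact ⟨p, mem_Icc.2 ⟨hp₁, hpn⟩, le_rfl, abs_lt.2 ⟨by omega, by omega⟩⟩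
  rw [card_filter_Icc_add_one hp₁ h.le_add_one, if_congr hnew rfl rfl]
  refine congrArg (_ + ·) (congrArg card (filter_congr fun x hx => ?_))
  rw [h.apply_succAbove x hx,
    h.exists_mem_Icc_add_one_apply_iff fun j wj => succAbove p x < j ∧ |wj| < u x, hv]
  simp only [succAbove_lt_succAbove_iff]
  have := hbound x hx
  exact or_iff_right fun ⟨_, h⟩ => by omega

end Words

variable {n : ℕ} {u w : Equiv.Perm ℤ} {p v : ℤ}

theorem NB_add_one (h : IsInsertion n u w p v) :
    NB (n + 1) w = NB n u + if v < 0 then 1 else 0 := by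
  unfold NB
  rw [Nat.cast_add_one, card_filter_Icc_add_one h.one_le h.le_add_one, h.apply_pos, add_comm]
  exact congrArg (· + _) (congrArg card (filter_congr fun x hx => by rw [h.apply_succAbove x hx]))

variable (hu : ∀ x ∈ Icc 1 (n : ℤ), |u x| ≤ n) (hv : |v| = n + 1)
include hu hv

theorem invB_add_one (h : IsInsertion n u w p v) :
    invB (n + 1) w = invB n u + if v < 0 then (n + p).toNat else (n + 1 - p).toNat := by
  have hv' := (abs_eq (by positivity)).1 hv
  have hbound := fun x hx => abs_le.1 (hu x hx)
  unfold invB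
  rw [Nat.cast_add_one, h.card_filter_pairs (fun a b => b < a),
    h.card_filter_pairs (fun a b => b < -a), h.NB_add_one,
    card_filter_Icc_lt_and h.le_add_one (c := v < 0) fun x hx => by have := hbound x hx; omega,
    card_filter_Icc_le_and h.one_le (c := 0 < v) fun x hx => by have := hbound x hx; omega,
    card_filter_Icc_lt_and h.le_add_one (c := v < 0) fun x hx => by have := hbound x hx; omega,
    card_filter_Icc_le_and h.one_le (c := v < 0) fun x hx => by have := hbound x hx; omega]
  have := h.one_le
  have := h.le_add_one
  split_ifs <;> omega

theorem mB_add_one (h : IsInsertion n u w p v) :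
    mB (n + 1) w = mB n u + if 0 < v ∧ p = n + 1 then 0 else 1 := by
  have := h.le_add_one
  have := (abs_eq (by positivity)).1 hv
  unfold mB
  rw [h.NB_add_one, Nat.cast_add_one, h.card_filter_exists_lt_abs_lt hu hv]
  split_ifs <;> omega

end IsInsertion

/-- `u * cycleTo (n + 1) k` is the word `u` with the letter `n + 1` (if `k > 0`) or `-(n + 1)`
(if `k < 0`) inserted at position `|k|`. It is the identity unless `k ≠ 0` and `|k| ≤ m`. -/
def cycleTo (m k : ℤ) : Equiv.Perm ℤ :=
  if hk : k ≠ 0 ∧ k.natAbs ≤ m then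
    { toFun x := if x = k then m else if x = -k then -m
        else if k.natAbs < x ∧ x ≤ m then x - 1
        else if -m ≤ x ∧ x < -k.natAbs then x + 1 else x
      invFun x := if x = m then k else if x = -m then -k
        else if k.natAbs ≤ x ∧ x < m then x + 1
        else if -m < x ∧ x ≤ -k.natAbs then x - 1 else x
      left_inv x := by dsimp only; split_ifs <;> omega
      right_inv x := by dsimp only; split_ifs <;> omega }
  else 1

section cycleTo

variable {m k : ℤ}

theorem cycleTo_apply (x : ℤ) : cycleTo m k x =
    if k ≠ 0 ∧ k.natAbs ≤ m then
      if x = k then m else if x = -k then -m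
      else if k.natAbs < x ∧ x ≤ m then x - 1
      else if -m ≤ x ∧ x < -k.natAbs then x + 1 else x
    else x := by
  unfold cycleTo
  by_cases hk : k ≠ 0 ∧ k.natAbs ≤ m
  · rw [dif_pos hk, if_pos hk]; rfl
  · rw [dif_neg hk, if_neg hk]; rfl

theorem cycleTo_neg (x : ℤ) : cycleTo m k (-x) = -cycleTo m k x := by
  simp only [cycleTo_apply]; split_ifs <;> omega

theorem cycleTo_apply_of_lt_abs {x : ℤ} (hx : m < |x|) : cycleTo m k x = x := by
  have := lt_abs.1 hx
  simp only [cycleTo_apply]; split_ifs <;> omega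

theorem cycleTo_apply_self (hk : k ≠ 0) (hkm : k.natAbs ≤ m) : cycleTo m k k = m := by
  simp only [cycleTo_apply]; split_ifs <;> omega

theorem cycleTo_apply_succAbove (hk : k ≠ 0) (hkm : k.natAbs ≤ m) {x : ℤ} (hx₀ : 0 ≤ x)
    (hxm : x < m) : cycleTo m k (succAbove k.natAbs x) = x := by
  simp only [cycleTo_apply, succAbove]; split_ifs <;> omega

end cycleTo

theorem abs_ite_neg {a : ℤ} (ha : 0 ≤ a) (c : Prop) [Decidable c] :
    |if c then -a else a| = a := by
  split_ifs <;> simp only [abs_neg, abs_of_nonneg ha]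

namespace IsSignedPerm

variable {n : ℕ} {u w : Equiv.Perm ℤ}

theorem apply_zero (hu : IsSignedPerm n u) : u 0 = 0 := by
  have := hu.1 0
  rw [neg_zero] at this
  omega

theorem abs_apply_le (hu : IsSignedPerm n u) {x : ℤ} (hx : |x| ≤ n) : |u x| ≤ n := by
  by_contra! h
  have : u x = x := u.injective (hu.2 _ h)
  rw [this] at h
  omega

theorem abs_apply_le_of_mem_Icc (hu : IsSignedPerm n u) : ∀ x ∈ Icc 1 (n : ℤ), |u x| ≤ n :=
  fun x hx => hu.abs_apply_le (abs_le.2 (by rw [mem_Icc] at hx; omega))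

theorem apply_add_one (hu : IsSignedPerm n u) : u (n + 1) = n + 1 :=
  hu.2 _ (by rw [abs_of_nonneg (by positivity)]; omega)

theorem mul (hu : IsSignedPerm n u) (hw : IsSignedPerm n w) : IsSignedPerm n (u * w) :=
  ⟨fun x => by rw [Equiv.Perm.mul_apply, hw.1, hu.1, Equiv.Perm.mul_apply],
    fun x hx => by rw [Equiv.Perm.mul_apply, hw.2 x hx, hu.2 x hx]⟩

theorem inv (hu : IsSignedPerm n u) : IsSignedPerm n u⁻¹ :=
  ⟨fun x => by rw [Equiv.Perm.inv_eq_iff_eq, hu.1, Equiv.Perm.coe_inv, Equiv.apply_symm_apply],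
    fun x hx => by rw [Equiv.Perm.inv_eq_iff_eq, hu.2 x hx]⟩

theorem mono {m : ℕ} (hu : IsSignedPerm n u) (hnm : n ≤ m) : IsSignedPerm m u :=
  ⟨hu.1, fun x hx => hu.2 x (by omega)⟩

theorem of_apply_add_one (hu : IsSignedPerm (n + 1) u) (hn : u (n + 1) = n + 1) :
    IsSignedPerm n u := by
  refine ⟨hu.1, fun x hx => ?_⟩
  obtain rfl | rfl | hx : x = n + 1 ∨ x = -(n + 1) ∨ ((n + 1 : ℕ) : ℤ) < |x| := by
    rw [lt_abs] at hx ⊢; omega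
  · exact hn
  · rw [hu.1, hn]
  · exact hu.2 x hx

end IsSignedPerm

theorem isSignedPerm_cycleTo (n : ℕ) (k : ℤ) : IsSignedPerm (n + 1) (cycleTo (n + 1) k) :=
  ⟨cycleTo_neg, fun _ hx => cycleTo_apply_of_lt_abs (by rwa [Nat.cast_add_one] at hx)⟩

namespace IsSignedPerm

variable {n : ℕ} {u w : Equiv.Perm ℤ} {k : ℤ}

theorem mul_cycleTo (hu : IsSignedPerm n u) : IsSignedPerm (n + 1) (u * cycleTo (n + 1) k) :=
  (hu.mono n.le_succ).mul (isSignedPerm_cycleTo n k)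

theorem exists_mul_cycleTo_eq (hw : IsSignedPerm (n + 1) w) :
    ∃ k u, k ≠ 0 ∧ k.natAbs ≤ n + 1 ∧ IsSignedPerm n u ∧ u * cycleTo (n + 1) k = w := by
  set k := w⁻¹ (n + 1)
  have hwk : w k = n + 1 := w.apply_symm_apply _
  have hk : |k| ≤ n + 1 := by
    have := hw.inv.abs_apply_le (x := n + 1) (by rw [abs_of_nonneg (by positivity)]; simp)
    rwa [Nat.cast_add_one] at this
  have hk₀ : k ≠ 0 := fun h => by rw [h, hw.apply_zero] at hwk; omega
  have hkn : k.natAbs ≤ n + 1 := by have := abs_le.1 hk; omega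
  refine ⟨k, w * (cycleTo (n + 1) k)⁻¹, hk₀, hkn, ?_, inv_mul_cancel_right _ _⟩
  refine (hw.mul (isSignedPerm_cycleTo n k).inv).of_apply_add_one ?_
  rw [Equiv.Perm.mul_apply, Equiv.Perm.inv_eq_iff_eq.2 (cycleTo_apply_self hk₀ (by omega)).symm,
    hwk]

variable (hu : IsSignedPerm n u) (hk : k ≠ 0) (hkn : k.natAbs ≤ n + 1)
include hu hk hkn

theorem mul_cycleTo_inv_apply : (u * cycleTo (n + 1) k)⁻¹ (n + 1) = k := by
  rw [Equiv.Perm.inv_eq_iff_eq, Equiv.Perm.mul_apply, cycleTo_apply_self hk (by omega),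
    hu.apply_add_one]

theorem isInsertion_mul_cycleTo :
    IsInsertion n u ⇑(u * cycleTo (n + 1) k) k.natAbs (if k < 0 then -(n + 1) else n + 1) where
  one_le := by omega
  le_add_one := by omega
  apply_pos := by
    have hc : cycleTo (n + 1) k k = n + 1 := cycleTo_apply_self hk (by omega)
    rw [Equiv.Perm.mul_apply]
    split_ifs
    · rw [show (k.natAbs : ℤ) = -k by omega, cycleTo_neg, hc, hu.1, hu.apply_add_one]
    · rw [show (k.natAbs : ℤ) = k by omega, hc, hu.apply_add_one]
  apply_succAbove x hx := by
    rw [mem_Icc] at hx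
    rw [Equiv.Perm.mul_apply, cycleTo_apply_succAbove hk (by omega) (by omega) (by omega)]

theorem invB_mul_cycleTo :
    invB (n + 1) (u * cycleTo (n + 1) k) =
      invB n u + if k < 0 then (n - k).toNat else (n + 1 - k).toNat := by
  rw [(isInsertion_mul_cycleTo hu hk hkn).invB_add_one hu.abs_apply_le_of_mem_Icc
    (abs_ite_neg (by positivity) _)]
  split_ifs <;> omega

theorem mB_mul_cycleTo :
    mB (n + 1) (u * cycleTo (n + 1) k) = mB n u + if k = n + 1 then 0 else 1 := by
  rw [(isInsertion_mul_cycleTo hu hk hkn).mB_add_one hu.abs_apply_le_of_mem_Icc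
    (abs_ite_neg (by positivity) _)]
  split_ifs <;> omega

end IsSignedPerm

noncomputable def insertionSlots (n : ℕ) : Finset ℤ := (Icc (-(n + 1 : ℤ)) (n + 1)).erase 0

theorem mem_insertionSlots {n : ℕ} {k : ℤ} :
    k ∈ insertionSlots n ↔ k ≠ 0 ∧ k.natAbs ≤ n + 1 := by
  rw [insertionSlots, mem_erase, mem_Icc]
  omega

open Classical in
noncomputable def signedPerms : ℕ → Finset (Equiv.Perm ℤ)
  | 0 => {1}
  | n + 1 => (insertionSlots n ×ˢ signedPerms n).image fun ku => ku.2 * cycleTo (n + 1) ku.1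

theorem mem_signedPerms {n : ℕ} {w : Equiv.Perm ℤ} : w ∈ signedPerms n ↔ IsSignedPerm n w := by
  induction n generalizing w with
  | zero =>
    rw [signedPerms, mem_singleton]
    refine ⟨by rintro rfl; exact ⟨fun _ => rfl, fun _ _ => rfl⟩, fun hw => ?_⟩
    ext x
    rcases eq_or_ne x 0 with rfl | hx
    · exact hw.apply_zero
    · exact hw.2 x (by simpa using hx)
  | succ n ih =>
    simp only [signedPerms, mem_image, mem_product, mem_insertionSlots, Prod.exists, ih]
    refine ⟨fun ⟨k, u, ⟨_, hu⟩, hw⟩ => hw ▸ hu.mul_cycleTo, fun hw => ?_⟩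
    obtain ⟨k, u, hk, hkn, hu, rfl⟩ := hw.exists_mul_cycleTo_eq
    exact ⟨k, u, ⟨⟨hk, hkn⟩, hu⟩, rfl⟩

theorem coe_signedPerms (n : ℕ) : (signedPerms n : Set (Equiv.Perm ℤ)) = {w | IsSignedPerm n w} :=
  Set.ext fun _ => mem_signedPerms

theorem injOn_mul_cycleTo (n : ℕ) :
    Set.InjOn (fun ku : ℤ × Equiv.Perm ℤ => ku.2 * cycleTo (n + 1) ku.1)
      ↑(insertionSlots n ×ˢ signedPerms n) := by
  rintro ⟨k, u⟩ hku ⟨k', u'⟩ hku' h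
  simp only [coe_product, Set.mem_prod, mem_coe, mem_insertionSlots, mem_signedPerms] at hku hku'
  dsimp only at h
  have hk : k = k' := by
    rw [← hku.2.mul_cycleTo_inv_apply hku.1.1 hku.1.2, h,
      hku'.2.mul_cycleTo_inv_apply hku'.1.1 hku'.1.2]
  subst hk
  rw [(mul_left_inj _).1 h]

theorem sum_insertionSlots {R : Type*} [CommRing R] (n : ℕ) (q t : R) :
    ∑ k ∈ insertionSlots n, q ^ (if k < 0 then (n - k).toNat else (n + 1 - k).toNat) *
        t ^ (if k = n + 1 then 0 else 1) =
      1 + t * ∑ j ∈ range (2 * (n + 1)), q ^ j - t := by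
  calc _ = ∑ j ∈ range (2 * n + 1 + 1), q ^ j * t ^ (if j = 0 then 0 else 1) := by
        refine sum_nbij' (fun k => if k < 0 then (n - k).toNat else (n + 1 - k).toNat)
          (fun j => if (j : ℤ) ≤ n then n + 1 - j else n - j) ?_ ?_ ?_ ?_ ?_ <;>
        · intro x hx
          simp only [mem_insertionSlots, mem_range] at hx ⊢
          split_ifs <;> first | rfl | omega
    _ = _ := by
      rw [show 2 * (n + 1) = 2 * n + 1 + 1 by ring, sum_range_succ', sum_range_succ' (q ^ ·)]
      simp only [Nat.succ_ne_zero, if_false, if_true, pow_zero, pow_one, mul_one, ← sum_mul]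
      ring

/-- `∑_{w ∈ B_n} q^{inv_B w} t^{m_B w} = ∏_{i=1}^{n} (1 + t·[2i]_q − t)`. -/
theorem invB_mB_generating_function {R : Type} [CommRing R] (n : ℕ) (q t : R) :
    (∑ᶠ w ∈ {w : Equiv.Perm ℤ | IsSignedPerm n w}, q ^ invB n w * t ^ mB n w) =
      ∏ i ∈ Finset.range n,
        (1 + t * (∑ j ∈ Finset.range (2 * (i + 1)), q ^ j) - t) := by
  classical
  rw [← coe_signedPerms, finsum_mem_coe_finset]
  induction n with
  | zero => simp [signedPerms, invB, NB, mB]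
  | succ n ih =>
    rw [signedPerms, sum_image (injOn_mul_cycleTo n), sum_product, prod_range_succ, ← ih,
      ← sum_insertionSlots, sum_mul_sum, sum_comm]
    refine sum_congr rfl fun u hu => sum_congr rfl fun k hk => ?_
    obtain ⟨hk₀, hkn⟩ := mem_insertionSlots.1 hk
    have hu := mem_signedPerms.1 hu
    rw [hu.invB_mul_cycleTo hk₀ hkn, hu.mB_mul_cycleTo hk₀ hkn]
    ring
end
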